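/- Let S be any finite composition f of the functions *x = max(0, 2x-1) and ¬x = 1-x on [0,1] that involves an even number of negations and at least one application of * occurring when the argument can lie in (1/2, 1). Then there exist rationals 0 ≤ a < b ≤ 1 such that f(x) = 0 for x ≤ a, f(x) = (x-a)/(b-a) for a ≤ x ≤ b, and f(x) = 1 for x ≥ b. In particular f is continuous and monotone nondecreasing on [0,1]. -/
import Mathlib


noncomputable def opOf : Bool → ℝ → ℝ :=
  fun b x => if b then max 0 (2 * x - 1) else 1 - x

noncomputable def compList (l : List Bool) (x : ℝ) : ℝ :=
  l.foldl (fun y b => opOf b y) x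

noncomputable def clampFn (a b x : ℝ) : ℝ := min 1 (max 0 ((x - a) / (b - a)))

lemma clamp_star (a b x : ℝ) (ha : 0 ≤ a) (hab : a < b) :
    clampFn a b (max 0 (2 * x - 1)) = clampFn ((a + 1) / 2) ((b + 1) / 2) x := by
  unfold clampFn
  rcases le_or_gt (2 * x - 1) 0 with h | h
  · rw [max_eq_left h]
    have h1 : (0 - a) / (b - a) ≤ 0 :=
      div_nonpos_iff.2 (Or.inr ⟨by linarith, by linarith⟩)
    have h2 : (x - (a + 1) / 2) / ((b + 1) / 2 - (a + 1) / 2) ≤ 0 :=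
      div_nonpos_iff.2 (Or.inr ⟨by linarith, by linarith⟩)
    rw [max_eq_left h1, max_eq_left h2]
  · rw [max_eq_right h.le]
    have : (2 * x - 1 - a) / (b - a) = (x - (a + 1) / 2) / ((b + 1) / 2 - (a + 1) / 2) := by
      rw [div_eq_div_iff (by linarith) (by linarith)]; ring
    rw [this]

lemma clamp_star' (c d x : ℝ) (hcd : c < d) (hd : d ≤ 1) :
    clampFn c d (1 - max 0 (2 * x - 1)) = clampFn (c / 2) (d / 2) (1 - x) := by
  unfold clampFn
  rcases le_or_gt (2 * x - 1) 0 with h | h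
  · rw [max_eq_left h]
    have h1 : (1 : ℝ) ≤ (1 - 0 - c) / (d - c) :=
      (one_le_div (by linarith)).2 (by linarith)
    have h2 : (1 : ℝ) ≤ (1 - x - c / 2) / (d / 2 - c / 2) :=
      (one_le_div (by linarith)).2 (by linarith)
    rw [min_eq_left (le_trans h1 (le_max_right _ _)),
        min_eq_left (le_trans h2 (le_max_right _ _))]
  · rw [max_eq_right h.le]
    have : (1 - (2 * x - 1) - c) / (d - c) = (1 - x - c / 2) / (d / 2 - c / 2) := by
      rw [div_eq_div_iff (by linarith) (by linarith)]; ring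
    rw [this]

lemma key (l : List Bool) : ∃ a b : ℚ, 0 ≤ a ∧ a < b ∧ b ≤ 1 ∧
    ∀ x : ℝ, 0 ≤ x → x ≤ 1 →
      compList l x = if Even (l.count false) then clampFn a b x
        else clampFn (1 - b) (1 - a) (1 - x) := by
  induction l with
  | nil =>
    refine ⟨0, 1, le_refl 0, by norm_num, le_refl 1, ?_⟩
    intro x hx hx1
    have h0 : compList [] x = x := rfl
    rw [h0, List.count_nil, if_pos Even.zero]
    unfold clampFn
    push_cast
    rw [sub_zero, sub_zero, div_one, max_eq_right hx, min_eq_right hx1]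
  | cons c l ih =>
    obtain ⟨a, b, ha, hab, hb, hf⟩ := ih
    have haR : (0 : ℝ) ≤ (a : ℝ) := by exact_mod_cast ha
    have habR : (a : ℝ) < (b : ℝ) := by exact_mod_cast hab
    have hbR : (b : ℝ) ≤ 1 := by exact_mod_cast hb
    cases c with
    | true =>
      refine ⟨(a + 1) / 2, (b + 1) / 2, by linarith, by linarith, by linarith, ?_⟩
      intro x hx hx1
      have hstep : compList (true :: l) x = compList l (max 0 (2 * x - 1)) := by
        simp [compList, opOf]
      have hy0 : (0 : ℝ) ≤ max 0 (2 * x - 1) := le_max_left _ _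
      have hy1 : max 0 (2 * x - 1) ≤ 1 := max_le (by norm_num) (by linarith)
      rw [hstep, hf _ hy0 hy1]
      have hcount : (true :: l).count false = l.count false := by simp
      rw [hcount]
      have e1 : ((a : ℝ) + 1) / 2 = ((((a + 1) / 2 : ℚ)) : ℝ) := by push_cast; ring
      have e2 : ((b : ℝ) + 1) / 2 = ((((b + 1) / 2 : ℚ)) : ℝ) := by push_cast; ring
      have e3 : (1 - (b : ℝ)) / 2 = 1 - ((((b + 1) / 2 : ℚ)) : ℝ) := by push_cast; ring
      have e4 : (1 - (a : ℝ)) / 2 = 1 - ((((a + 1) / 2 : ℚ)) : ℝ) := by push_cast; ring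
      by_cases hE : Even (l.count false)
      · rw [if_pos hE, if_pos hE, clamp_star _ _ _ haR habR, e1, e2]
      · rw [if_neg hE, if_neg hE, clamp_star' _ _ _ (by linarith) (by linarith), e3, e4]
    | false =>
      refine ⟨1 - b, 1 - a, by linarith, by linarith, by linarith, ?_⟩
      intro x hx hx1
      have hstep : compList (false :: l) x = compList l (1 - x) := by
        simp [compList, opOf]
      rw [hstep, hf _ (by linarith) (by linarith)]
      have hcount : (false :: l).count false = l.count false + 1 := by simp
      rw [hcount]
      have e1 : (a : ℝ) = 1 - (((1 - a : ℚ)) : ℝ) := by push_cast; ring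
      have e2 : (b : ℝ) = 1 - (((1 - b : ℚ)) : ℝ) := by push_cast; ring
      by_cases hE : Even (l.count false)
      · rw [if_pos hE, if_neg (by simpa [Nat.even_add_one] using hE)]
        rw [← e1, ← e2]
      · rw [if_neg hE, if_pos (Nat.even_add_one.mpr hE), sub_sub_cancel]
        norm_cast

theorem even_neg_composition_form (l : List Bool) (heven : Even (l.count false)) :
    ∃ a b : ℚ, 0 ≤ a ∧ a < b ∧ b ≤ 1 ∧
      (∀ x : ℝ, 0 ≤ x → x ≤ (a : ℝ) → compList l x = 0) ∧
      (∀ x : ℝ, (a : ℝ) ≤ x → x ≤ (b : ℝ) → compList l x = (x - a) / ((b : ℝ) - a)) ∧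
      (∀ x : ℝ, (b : ℝ) ≤ x → x ≤ 1 → compList l x = 1) ∧
      ContinuousOn (compList l) (Set.Icc 0 1) ∧
      MonotoneOn (compList l) (Set.Icc 0 1) := by
  obtain ⟨a, b, ha, hab, hb, hf⟩ := key l
  have haR : (0 : ℝ) ≤ (a : ℝ) := by exact_mod_cast ha
  have habR : (a : ℝ) < (b : ℝ) := by exact_mod_cast hab
  have hbR : (b : ℝ) ≤ 1 := by exact_mod_cast hb
  have hform : ∀ x : ℝ, 0 ≤ x → x ≤ 1 → compList l x = clampFn a b x := by
    intro x hx hx1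
    rw [hf x hx hx1, if_pos heven]
  refine ⟨a, b, ha, hab, hb, ?_, ?_, ?_, ?_, ?_⟩
  · intro x hx hxa
    rw [hform x hx (by linarith), clampFn]
    have h1 : (x - a) / ((b:ℝ) - a) ≤ 0 :=
      div_nonpos_iff.2 (Or.inr ⟨by linarith, by linarith⟩)
    rw [max_eq_left h1, min_eq_right (by norm_num)]
  · intro x hxa hxb
    rw [hform x (by linarith) (by linarith), clampFn]
    have h1 : (0:ℝ) ≤ (x - a) / ((b:ℝ) - a) :=
      div_nonneg (by linarith) (by linarith)
    have h2 : (x - a) / ((b:ℝ) - a) ≤ 1 :=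
      (div_le_one (by linarith)).2 (by linarith)
    rw [max_eq_right h1, min_eq_right h2]
  · intro x hxb hx1
    rw [hform x (by linarith) hx1, clampFn]
    have h1 : (1:ℝ) ≤ (x - a) / ((b:ℝ) - a) :=
      (one_le_div (by linarith)).2 (by linarith)
    rw [min_eq_left (le_trans h1 (le_max_right _ _))]
  · apply ContinuousOn.congr (f := clampFn a b)
    · exact (continuous_const.min ((continuous_const.max
        ((continuous_id.sub continuous_const).div_const _)))).continuousOn
    · intro x hx
      exact hform x hx.1 hx.2
  · intro x hx y hy hxy
    rw [hform x hx.1 hx.2, hform y hy.1 hy.2, clampFn, clampFn]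
    refine min_le_min le_rfl (max_le_max le_rfl ?_)
    gcongr
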